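/- arXiv:math/0511521 — 3 statements merged into one kernel-verified Lean document; each statement's English description precedes it below -/
import Mathlib

section
/- (Inhomogeneous super Yang-Mills, component form) Tensors j̃^{αβγ}, j̃^{αβ}, j̃^{α} over K satisfy the super PBW conditions — (i) j̃^{αβγ} + j̃^{βγα} = (g^{αβ}g^{γρ} − g^{βγ}g^{αρ})b_ρ for some b_ρ; (ii) j̃^{αβγ}b_γ + j̃^{αβ} + j̃^{βα} = 0; (iii) j̃^{αγ}b_γ + 2 j̃^{α} = 0; (iv) j̃^{ρ}b_ρ = 0 — if and only if j̃^{αβγ} = (g^{αγ}g^{βρ} − g^{βγ}g^{αρ})b_ρ, j̃^{αβ} = ω^{αβ} with ω antisymmetric (ω^{αβ} = −ω^{βα}), and j̃^{α} = −(1/2) ω^{αρ}b_ρ. -/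
/-!
Put `c^α = g^{αρ} b_ρ` and `T^{αβγ} = g^{αγ} c^β - g^{βγ} c^α`. Since `g` is symmetric, `T` satisfies
condition (i), so `j̃^{αβγ} - T^{αβγ}` has vanishing rotation sums; such a tensor `D` is zero once
`2` is invertible, as `D_{αβγ} = -D_{βγα} = D_{γαβ} = -D_{αβγ}`. As `T^{αβγ} b_γ = c^α c^β - c^β c^α = 0`,
condition (ii) says that `j̃^{αβ}` is antisymmetric, (iii) determines `j̃^α`, and (iv) is then automatic
because an antisymmetric form vanishes on the diagonal.
-/

open Finset

section

variable {ι R : Type*}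

theorem eq_zero_of_add_rotate_eq_zero [CommRing R] [NoZeroDivisors R] (h2 : (2 : R) ≠ 0)
    {D : ι → ι → ι → R} (hD : ∀ α β γ, D α β γ + D β γ α = 0) : D = 0 := by
  ext α β γ
  have h : (2 : R) * D α β γ = 0 := by
    linear_combination hD α β γ - hD β γ α + hD γ α β
  exact (mul_eq_zero.mp h).resolve_left h2

variable [Fintype ι] [CommRing R]

theorem sum_sum_mul_mul_eq_zero_of_antisymm [NoZeroDivisors R] (h2 : (2 : R) ≠ 0)
    {ω : ι → ι → R} (hω : ∀ α β, ω α β = -ω β α) (b : ι → R) :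
    ∑ α, (∑ β, ω α β * b β) * b α = 0 := by
  set S := ∑ α, (∑ β, ω α β * b β) * b α
  have hS : S = -S := calc
    S = ∑ β, ∑ α, ω α β * b β * b α := by simp only [S, sum_mul]; exact sum_comm
    _ = ∑ β, ∑ α, -(ω β α * b α * b β) :=
      sum_congr rfl fun β _ => sum_congr rfl fun α _ => by rw [hω α β]; ring
    _ = -S := by simp only [S, sum_neg_distrib, sum_mul]
  have h : (2 : R) * S = 0 := by linear_combination hS
  exact (mul_eq_zero.mp h).resolve_left h2

theorem sum_mul_sub_mul_mul (x y : R) (u v b : ι → R) :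
    ∑ ρ, (x * u ρ - y * v ρ) * b ρ = x * ∑ ρ, u ρ * b ρ - y * ∑ ρ, v ρ * b ρ := by
  simp only [mul_sum, ← sum_sub_distrib]
  exact sum_congr rfl fun ρ _ => by ring

def regularCubicCurrent (g : ι → ι → R) (b : ι → R) (α β γ : ι) : R :=
  g α γ * ∑ ρ, g β ρ * b ρ - g β γ * ∑ ρ, g α ρ * b ρ

variable (g : ι → ι → R) (b : ι → R)

theorem regularCubicCurrent_eq_sum (α β γ : ι) :
    regularCubicCurrent g b α β γ = ∑ ρ, (g α γ * g β ρ - g β γ * g α ρ) * b ρ :=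
  (sum_mul_sub_mul_mul _ _ _ _ _).symm

theorem regularCubicCurrent_add_rotate (hg : ∀ α β, g α β = g β α) (α β γ : ι) :
    regularCubicCurrent g b α β γ + regularCubicCurrent g b β γ α =
      ∑ ρ, (g α β * g γ ρ - g β γ * g α ρ) * b ρ := by
  rw [sum_mul_sub_mul_mul, regularCubicCurrent, regularCubicCurrent]
  linear_combination (∑ ρ, g β ρ * b ρ) * hg α γ + (∑ ρ, g γ ρ * b ρ) * hg β α

theorem sum_regularCubicCurrent_mul (α β : ι) :
    ∑ γ, regularCubicCurrent g b α β γ * b γ = 0 := by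
  simp only [regularCubicCurrent, sub_mul, sum_sub_distrib, mul_right_comm (g _ _) (∑ ρ, _),
    ← sum_mul]
  exact sub_eq_zero.mpr (mul_comm _ _)

theorem eq_regularCubicCurrent_of_add_rotate [NoZeroDivisors R] (h2 : (2 : R) ≠ 0)
    (hg : ∀ α β, g α β = g β α) {j : ι → ι → ι → R}
    (hj : ∀ α β γ, j α β γ + j β γ α = ∑ ρ, (g α β * g γ ρ - g β γ * g α ρ) * b ρ) :
    j = regularCubicCurrent g b :=
  sub_eq_zero.mp <| eq_zero_of_add_rotate_eq_zero h2 fun α β γ => by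
    simp only [Pi.sub_apply]
    linear_combination hj α β γ - regularCubicCurrent_add_rotate g b hg α β γ

end

theorem regular_currents_super_yang_mills_general {K : Type*} [Field K] (hchar : (2 : K) ≠ 0) {s : ℕ}
    (g : Fin (s + 1) → Fin (s + 1) → K)
    (hsym : ∀ α β, g α β = g β α)
    (j3 : Fin (s + 1) → Fin (s + 1) → Fin (s + 1) → K)
    (j2 : Fin (s + 1) → Fin (s + 1) → K)
    (j1 : Fin (s + 1) → K) :
    (∃ b : Fin (s + 1) → K,
        (∀ α β γ, j3 α β γ + j3 β γ α = ∑ ρ, (g α β * g γ ρ - g β γ * g α ρ) * b ρ) ∧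
        (∀ α β, (∑ γ, j3 α β γ * b γ) + j2 α β + j2 β α = 0) ∧
        (∀ α, (∑ γ, j2 α γ * b γ) + 2 * j1 α = 0) ∧
        (∑ ρ, j1 ρ * b ρ = 0)) ↔
    (∃ (b : Fin (s + 1) → K) (ω : Fin (s + 1) → Fin (s + 1) → K),
        (∀ α β, ω α β = -ω β α) ∧
        (∀ α β γ, j3 α β γ = ∑ ρ, (g α γ * g β ρ - g β γ * g α ρ) * b ρ) ∧
        (∀ α β, j2 α β = ω α β) ∧
        (∀ α, j1 α = -(1/2) * ∑ ρ, ω α ρ * b ρ)) := by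
  have half : (2 : K) * (1 / 2) = 1 := mul_one_div_cancel hchar
  constructor
  · rintro ⟨b, h1, h2, h3, -⟩
    obtain rfl : j3 = regularCubicCurrent g b :=
      eq_regularCubicCurrent_of_add_rotate g b hchar hsym h1
    refine ⟨b, j2, fun α β => ?_, regularCubicCurrent_eq_sum g b, fun _ _ => rfl, fun α => ?_⟩
    · linear_combination h2 α β - sum_regularCubicCurrent_mul g b α β
    · linear_combination (1 / 2 : K) * h3 α - j1 α * half
  · rintro ⟨b, ω, hω, h3, h2, h1⟩
    obtain rfl : j3 = regularCubicCurrent g b :=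
      funext₃ fun α β γ => (h3 α β γ).trans (regularCubicCurrent_eq_sum g b α β γ).symm
    obtain rfl : j2 = ω := funext₂ h2
    obtain rfl : j1 = fun α => -(1 / 2) * ∑ ρ, j2 α ρ * b ρ := funext h1
    refine ⟨b, regularCubicCurrent_add_rotate g b hsym, fun α β => ?_, fun α => ?_, ?_⟩
    · rw [sum_regularCubicCurrent_mul, hω α β]; ring
    · linear_combination -(∑ ρ, j2 α ρ * b ρ) * half
    · simp only [mul_assoc, ← mul_sum, sum_sum_mul_mul_eq_zero_of_antisymm hchar hω b, mul_zero]

/-- Inhomogeneous super Yang-Mills, component form: the four super PBW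
conditions hold (for some `b`) iff the current has the form of Theorem 4.2 of the paper. -/
theorem regular_currents_super_yang_mills {K : Type*} [Field K] (hchar : (2 : K) ≠ 0) {s : ℕ}
    (g ginv : Fin (s + 1) → Fin (s + 1) → K)
    (hsym : ∀ α β, g α β = g β α)
    (hinv : ∀ α γ, ∑ β, g α β * ginv β γ = if α = γ then 1 else 0)
    (j3 : Fin (s + 1) → Fin (s + 1) → Fin (s + 1) → K)
    (j2 : Fin (s + 1) → Fin (s + 1) → K)
    (j1 : Fin (s + 1) → K) :
    (∃ b : Fin (s + 1) → K,
        (∀ α β γ, j3 α β γ + j3 β γ α = ∑ ρ, (g α β * g γ ρ - g β γ * g α ρ) * b ρ) ∧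
        (∀ α β, (∑ γ, j3 α β γ * b γ) + j2 α β + j2 β α = 0) ∧
        (∀ α, (∑ γ, j2 α γ * b γ) + 2 * j1 α = 0) ∧
        (∑ ρ, j1 ρ * b ρ = 0)) ↔
    (∃ (b : Fin (s + 1) → K) (ω : Fin (s + 1) → Fin (s + 1) → K),
        (∀ α β, ω α β = -ω β α) ∧
        (∀ α β γ, j3 α β γ = ∑ ρ, (g α γ * g β ρ - g β γ * g α ρ) * b ρ) ∧
        (∀ α β, j2 α β = ω α β) ∧
        (∀ α, j1 α = -(1/2) * ∑ ρ, ω α ρ * b ρ)) :=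
  regular_currents_super_yang_mills_general hchar g hsym j3 j2 j1
end

section
/- (PBW criterion for inhomogeneous quadratic Lie-type relations) Let V be a vector space and ψ : V × V → V an alternating bilinear map. Let P = span{x⊗y − y⊗x − ψ(x,y) : x,y ∈ V} ⊆ K ⊕ V ⊕ V⊗V. Then the condition (P·V + V·P) ∩ (K ⊕ V ⊕ V⊗V) ⊆ P is equivalent to the Jacobi identity ψ(ψ(x,y),z) + ψ(ψ(y,z),x) + ψ(ψ(z,x),y) = 0 for all x,y,z ∈ V. -/
open TensorAlgebra Module

noncomputable section

namespace PBWAux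

variable {K : Type*} [Field K] {V : Type*} [AddCommGroup V] [Module K V]
  {Q : Type*} [AddCommGroup Q] [Module K Q] {I : Type*}

theorem bT_ofList (b : Basis I K V) (l : List I) :
    b.tensorAlgebra (FreeMonoid.ofList l) = (l.map (fun i => ι K (b i))).prod := by
  let E : MonoidAlgebra K (FreeMonoid I) ≃ₐ[K] TensorAlgebra K V :=
    FreeAlgebra.equivMonoidAlgebraFreeMonoid.symm.trans (equivFreeAlgebra b).symm
  have hE : ∀ w : FreeMonoid I, b.tensorAlgebra w = E (MonoidAlgebra.of K (FreeMonoid I) w) := by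
    intro w
    simp only [Basis.tensorAlgebra, FreeAlgebra.basisFreeMonoid, Basis.map_apply,
      Finsupp.coe_basisSingleOne, AlgEquiv.toLinearEquiv_apply, AlgEquiv.trans_apply, E]
    rfl
  have hof : ∀ i : I, E (MonoidAlgebra.of K (FreeMonoid I) (FreeMonoid.of i)) = ι K (b i) := by
    intro i
    have h1 : FreeAlgebra.equivMonoidAlgebraFreeMonoid.symm
        (MonoidAlgebra.of K (FreeMonoid I) (FreeMonoid.of i)) = FreeAlgebra.ι K i := by
      rw [(AlgEquiv.symm_apply_eq _)]
      simp [FreeAlgebra.equivMonoidAlgebraFreeMonoid]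
    simp only [MonoidAlgebra.of_apply] at h1
    simp [E, AlgEquiv.trans_apply, MonoidAlgebra.of_apply, h1]
  induction l with
  | nil =>
    rw [hE, show FreeMonoid.ofList ([] : List I) = 1 from rfl, map_one, map_one]
    simp
  | cons i l ih =>
    rw [hE] at ih ⊢
    rw [show FreeMonoid.ofList (i :: l) = FreeMonoid.of i * FreeMonoid.ofList l from rfl,
      map_mul, map_mul, ih, hof]
    simp [mul_assoc]

section Ord
variable [LinearOrder I]

def nf2 (π : TensorAlgebra K V →ₗ[K] Q) (ψ : V →ₗ[K] V →ₗ[K] V)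
    (b : Basis I K V) (i j k : I) : Q :=
  (if i ≤ j then π (ι K (b i) * ι K (b j) * ι K (b k))
  else (if i ≤ k then π (ι K (b j) * ι K (b i) * ι K (b k))
        else π (ι K (b j) * ι K (b k) * ι K (b i)) + π (ι K (b j) * ι K (ψ (b i) (b k))))
       + π (ι K (ψ (b i) (b j)) * ι K (b k)))

def nf (π : TensorAlgebra K V →ₗ[K] Q) (ψ : V →ₗ[K] V →ₗ[K] V)
    (b : Basis I K V) (i j k : I) : Q :=
  if j ≤ k then nf2 π ψ b i j k
  else nf2 π ψ b i k j + π (ι K (b i) * ι K (ψ (b j) (b k)))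

theorem psi_anti (ψ : V →ₗ[K] V →ₗ[K] V) (halt : ∀ x, ψ x x = 0) (x y : V) :
    ψ y x = - ψ x y := by
  have h0 : ψ y x + ψ x y = 0 := by
    have h := halt (x + y)
    simpa [map_add, LinearMap.add_apply, halt] using h
  exact eq_neg_of_add_eq_zero_left h0

theorem swapR (π : TensorAlgebra K V →ₗ[K] Q) (ψ : V →ₗ[K] V →ₗ[K] V)
    (halt : ∀ x, ψ x x = 0) (b : Basis I K V) (i j k : I) :
    nf π ψ b i j k = nf π ψ b i k j + π (ι K (b i) * ι K (ψ (b j) (b k))) := by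
  have hanti := psi_anti ψ halt
  rcases lt_trichotomy j k with h | rfl | h
  · rw [nf, if_pos h.le, nf, if_neg (not_le.mpr h), hanti (b j) (b k)]
    simp only [map_neg, mul_neg, LinearMap.map_neg]
    abel
  · simp [halt]
  · rw [nf, if_neg (not_le.mpr h), nf, if_pos h.le]

theorem swapL_aux (π : TensorAlgebra K V →ₗ[K] Q) (ψ : V →ₗ[K] V →ₗ[K] V)
    (halt : ∀ x, ψ x x = 0)
    (hjac : ∀ x y z : V, ψ (ψ x y) z + ψ (ψ y z) x + ψ (ψ z x) y = 0)
    (hrel : ∀ x y : V, π (ι K x * ι K y) = π (ι K y * ι K x) + π (ι K (ψ x y)))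
    (b : Basis I K V) (i j k : I) (hij : i < j) :
    nf π ψ b i j k = nf π ψ b j i k + π (ι K (ψ (b i) (b j)) * ι K (b k)) := by
  have hanti := psi_anti ψ halt
  rcases lt_trichotomy k i with hki | rfl | hik
  · -- k < i < j
    rw [nf, if_neg (not_le.mpr (hki.trans hij)), nf2, if_neg (not_le.mpr hki),
      if_pos hij.le, nf, if_neg (not_le.mpr hki), nf2, if_neg (not_le.mpr (hki.trans hij)),
      if_neg (not_le.mpr hij)]
    rw [hrel (ψ (b i) (b k)) (b j), hrel (b i) (ψ (b j) (b k)),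
      hanti (b i) (b j)]
    simp only [map_neg, mul_neg, neg_mul, LinearMap.map_neg]
    have hvec : ψ (ψ (b i) (b k)) (b j) + ψ (b i) (ψ (b j) (b k))
        = - ψ (b k) (ψ (b i) (b j)) := by
      have h := hjac (b i) (b j) (b k)
      rw [hanti (b k) (b i), hanti (ψ (b j) (b k)) (b i), hanti (ψ (b i) (b j)) (b k)]
      rw [add_assoc, add_eq_zero_iff_eq_neg] at h
      simp only [map_neg, LinearMap.neg_apply]
      rw [h]
      abel
    have hvec' : ψ (ψ (b i) (b k)) (b j)
        = - ψ (b k) (ψ (b i) (b j)) - ψ (b i) (ψ (b j) (b k)) := eq_sub_of_add_eq hvec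
    rw [hvec', hrel (b k) (ψ (b i) (b j))]
    simp only [map_sub, map_neg, map_add]
    abel
  · -- k = i < j
    rw [nf, if_neg (not_le.mpr hij), nf2, if_pos le_rfl, nf, if_pos le_rfl, nf2,
      if_neg (not_le.mpr hij), if_neg (not_le.mpr hij), hanti (b k) (b j)]
    simp only [map_neg, mul_neg, neg_mul, LinearMap.map_neg]
    abel
  · -- i < k
    rcases le_or_gt j k with hjk | hkj
    · -- i < j ≤ k
      rw [nf, if_pos hjk, nf2, if_pos hij.le, nf, if_pos (hij.le.trans hjk), nf2,
        if_neg (not_le.mpr hij), if_pos hjk, hanti (b i) (b j)]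
      simp only [map_neg, mul_neg, neg_mul, LinearMap.map_neg]
      abel
    · -- i < k < j
      rw [nf, if_neg (not_le.mpr hkj), nf2, if_pos hik.le, nf, if_pos hik.le, nf2,
        if_neg (not_le.mpr hij), if_neg (not_le.mpr hkj), hanti (b i) (b j)]
      simp only [map_neg, mul_neg, neg_mul, LinearMap.map_neg]
      abel

theorem swapL (π : TensorAlgebra K V →ₗ[K] Q) (ψ : V →ₗ[K] V →ₗ[K] V)
    (halt : ∀ x, ψ x x = 0)
    (hjac : ∀ x y z : V, ψ (ψ x y) z + ψ (ψ y z) x + ψ (ψ z x) y = 0)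
    (hrel : ∀ x y : V, π (ι K x * ι K y) = π (ι K y * ι K x) + π (ι K (ψ x y)))
    (b : Basis I K V) (i j k : I) :
    nf π ψ b i j k = nf π ψ b j i k + π (ι K (ψ (b i) (b j)) * ι K (b k)) := by
  have hanti := psi_anti ψ halt
  rcases lt_trichotomy i j with hij | rfl | hji
  · exact swapL_aux π ψ halt hjac hrel b i j k hij
  · simp [halt]
  · have h := swapL_aux π ψ halt hjac hrel b j i k hji
    rw [h, hanti (b j) (b i)]
    simp only [map_neg, neg_mul, LinearMap.map_neg]
    abel

def fword (π : TensorAlgebra K V →ₗ[K] Q) (ψ : V →ₗ[K] V →ₗ[K] V)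
    (b : Basis I K V) : List I → Q
  | [] => π 1
  | [i] => π (ι K (b i))
  | [i, j] => π (ι K (b i) * ι K (b j))
  | [i, j, k] => nf π ψ b i j k
  | _ => 0

end Ord

def gword (β : V →ₗ[K] V →ₗ[K] V) (b : Basis I K V) : List I → V
  | [i] => b i
  | [i, j] => β (b i) (b j)
  | _ => 0

def mul2 : V →ₗ[K] V →ₗ[K] TensorAlgebra K V :=
  LinearMap.mk₂ K (fun x y => ι K x * ι K y)
    (fun x x' y => by simp [add_mul])
    (fun c x y => by simp [smul_mul_assoc])
    (fun x y y' => by simp [mul_add])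
    (fun c x y => by simp [mul_smul_comm])

@[simp] theorem mul2_apply (x y : V) : (mul2 (K := K)) x y = ι K x * ι K y := rfl

def qmap (ψ : V →ₗ[K] V →ₗ[K] V) : V →ₗ[K] V →ₗ[K] TensorAlgebra K V :=
  LinearMap.mk₂ K (fun x y => ι K x * ι K y - ι K y * ι K x - ι K (ψ x y))
    (fun x x' y => by simp [add_mul, mul_add, map_add, LinearMap.add_apply]; abel)
    (fun c x y => by simp [smul_mul_assoc, mul_smul_comm, map_smul, LinearMap.smul_apply]; module)
    (fun x y y' => by simp [add_mul, mul_add, map_add]; abel)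
    (fun c x y => by simp [smul_mul_assoc, mul_smul_comm, map_smul]; module)

@[simp] theorem qmap_apply (ψ : V →ₗ[K] V →ₗ[K] V) (x y : V) :
    qmap ψ x y = ι K x * ι K y - ι K y * ι K x - ι K (ψ x y) := rfl

end PBWAux
-- to be appended after PBWAux
set_option maxHeartbeats 1000000 in
/-- PBW criterion for inhomogeneous quadratic Lie-type relations:
inside the tensor algebra `T(V)`, with
`P = span{x⊗y − y⊗x − ψ(x,y)}` and `F² = span(K ∪ V ∪ V⊗V)`, the condition
`(P·V + V·P) ∩ F² ⊆ P` is equivalent to the Jacobi identity for the alternating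
bilinear map `ψ`. -/
theorem pbw_iff_jacobi {K : Type*} [Field K] {V : Type*} [AddCommGroup V] [Module K V]
    (ψ : V →ₗ[K] V →ₗ[K] V) (halt : ∀ x, ψ x x = 0)
    (P F2 PV VP : Submodule K (TensorAlgebra K V))
    (hP : P = Submodule.span K
      {z | ∃ x y : V, z = TensorAlgebra.ι K x * TensorAlgebra.ι K y -
        TensorAlgebra.ι K y * TensorAlgebra.ι K x - TensorAlgebra.ι K (ψ x y)})
    (hF2 : F2 = Submodule.span K
      ({z | ∃ c : K, z = algebraMap K (TensorAlgebra K V) c} ∪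
       {z | ∃ x : V, z = TensorAlgebra.ι K x} ∪
       {z | ∃ x y : V, z = TensorAlgebra.ι K x * TensorAlgebra.ι K y}))
    (hPV : PV = Submodule.span K {z | ∃ p ∈ P, ∃ v : V, z = p * TensorAlgebra.ι K v})
    (hVP : VP = Submodule.span K {z | ∃ p ∈ P, ∃ v : V, z = TensorAlgebra.ι K v * p}) :
    ((PV ⊔ VP) ⊓ F2 ≤ P) ↔
      (∀ x y z : V, ψ (ψ x y) z + ψ (ψ y z) x + ψ (ψ z x) y = 0) := by
  classical
  have hanti := PBWAux.psi_anti ψ halt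
  have hqP : ∀ x y : V, ι K x * ι K y - ι K y * ι K x - ι K (ψ x y) ∈ P := fun x y => by
    rw [hP]; exact Submodule.subset_span ⟨x, y, rfl⟩
  set I := Basis.ofVectorSpaceIndex K V with hI
  let b : Basis I K V := Basis.ofVectorSpace K V
  letI : LinearOrder I := IsWellOrder.linearOrder WellOrderingRel
  let bT : Basis (FreeMonoid I) K (TensorAlgebra K V) := b.tensorAlgebra
  have hbT : ∀ l : List I, bT (FreeMonoid.ofList l) = (l.map fun i => ι K (b i)).prod :=
    PBWAux.bT_ofList b
  constructor
  · -- inclusion → Jacobi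
    intro hle x y z
    -- the "half of ψ" bilinear map β
    let β : V →ₗ[K] V →ₗ[K] V := b.constr K fun i => b.constr K fun j =>
      if i < j then ψ (b i) (b j) else 0
    have hβ : ∀ u v : V, β u v - β v u = ψ u v := by
      have h : (β - β.flip) = ψ := by
        apply LinearMap.ext_basis b b
        intro i j
        simp only [LinearMap.sub_apply, LinearMap.flip_apply, β, Basis.constr_basis]
        rcases lt_trichotomy i j with h | rfl | h
        · rw [if_pos h, if_neg (not_lt.mpr h.le), sub_zero]
        · rw [if_neg (lt_irrefl i), halt, sub_zero]
        · rw [if_pos h, if_neg (not_lt.mpr h.le), hanti (b j) (b i), zero_sub]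
      intro u v
      have := LinearMap.congr_fun (LinearMap.congr_fun h u) v
      simpa using this
    -- the retraction G
    let G : TensorAlgebra K V →ₗ[K] V :=
      bT.constr K fun w => PBWAux.gword β b (FreeMonoid.toList w)
    have hG1 : ∀ v : V, G (ι K v) = v := by
      have h : G ∘ₗ (TensorAlgebra.ι K : V →ₗ[K] TensorAlgebra K V) = LinearMap.id := by
        apply b.ext
        intro i
        have hone : ι K (b i) = bT (FreeMonoid.ofList [i]) := by rw [hbT]; simp
        simp only [LinearMap.comp_apply, LinearMap.id_apply, hone, G, Basis.constr_basis]
        rfl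
      intro v
      exact LinearMap.congr_fun h v
    have hG2 : ∀ u v : V, G (ι K u * ι K v) = β u v := by
      have h : (PBWAux.mul2 (K := K) (V := V)).compr₂ G = β := by
        apply LinearMap.ext_basis b b
        intro i j
        have htwo : ι K (b i) * ι K (b j) = bT (FreeMonoid.ofList [i, j]) := by
          rw [hbT]; simp
        simp only [LinearMap.compr₂_apply, PBWAux.mul2_apply, htwo, G, Basis.constr_basis]
        rfl
      intro u v
      have := LinearMap.congr_fun (LinearMap.congr_fun h u) v
      simpa using this
    have hinj : ∀ v : V, ι K v ∈ P → v = 0 := by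
      have hPG : P ≤ LinearMap.ker G := by
        rw [hP, Submodule.span_le]
        rintro _ ⟨u, v, rfl⟩
        rw [SetLike.mem_coe, LinearMap.mem_ker, map_sub, map_sub, hG2, hG2, hG1, ← hβ u v]
        abel
      intro v hv
      have := hPG hv
      rwa [LinearMap.mem_ker, hG1] at this
    -- the element A
    set q : V → V → TensorAlgebra K V :=
      fun u v => ι K u * ι K v - ι K v * ι K u - ι K (ψ u v) with hq
    set A : TensorAlgebra K V :=
      q x y * ι K z + q y z * ι K x + q z x * ι K y
        - ι K x * q y z - ι K y * q z x - ι K z * q x y with hA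
    have hA1 : A ∈ PV ⊔ VP := by
      have hpv : ∀ u v w' : V, q u v * ι K w' ∈ PV := fun u v w' => by
        rw [hPV]; exact Submodule.subset_span ⟨q u v, hqP u v, w', rfl⟩
      have hvp : ∀ u v w' : V, ι K w' * q u v ∈ VP := fun u v w' => by
        rw [hVP]; exact Submodule.subset_span ⟨q u v, hqP u v, w', rfl⟩
      exact sub_mem (sub_mem (sub_mem (add_mem (add_mem
        (Submodule.mem_sup_left (hpv x y z)) (Submodule.mem_sup_left (hpv y z x)))
        (Submodule.mem_sup_left (hpv z x y)))
        (Submodule.mem_sup_right (hvp y z x))) (Submodule.mem_sup_right (hvp z x y)))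
        (Submodule.mem_sup_right (hvp x y z))
    have hA2 : A = ι K x * ι K (ψ y z) + ι K y * ι K (ψ z x) + ι K z * ι K (ψ x y)
        - ι K (ψ x y) * ι K z - ι K (ψ y z) * ι K x - ι K (ψ z x) * ι K y := by
      rw [hA, hq]
      noncomm_ring
    have hAF2 : A ∈ F2 := by
      rw [hA2, hF2]
      have hg : ∀ u v : V, ι K u * ι K v ∈ Submodule.span K
          ({z | ∃ c : K, z = algebraMap K (TensorAlgebra K V) c} ∪
           {z | ∃ x : V, z = TensorAlgebra.ι K x} ∪
           {z | ∃ x y : V, z = TensorAlgebra.ι K x * TensorAlgebra.ι K y}) := fun u v =>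
        Submodule.subset_span (Set.mem_union_right _ ⟨u, v, rfl⟩)
      exact sub_mem (sub_mem (sub_mem (add_mem (add_mem (hg _ _) (hg _ _)) (hg _ _))
        (hg _ _)) (hg _ _)) (hg _ _)
    have hAP : A ∈ P := hle (Submodule.mem_inf.mpr ⟨hA1, hAF2⟩)
    have hBP : q x (ψ y z) + q y (ψ z x) + q z (ψ x y) ∈ P :=
      add_mem (add_mem (hqP _ _) (hqP _ _)) (hqP _ _)
    have hSP : ι K (ψ x (ψ y z) + ψ y (ψ z x) + ψ z (ψ x y)) ∈ P := by
      have h := sub_mem hAP hBP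
      have heq : A - (q x (ψ y z) + q y (ψ z x) + q z (ψ x y))
          = ι K (ψ x (ψ y z) + ψ y (ψ z x) + ψ z (ψ x y)) := by
        rw [hA, hq]
        simp only [map_add]
        noncomm_ring
      rwa [heq] at h
    have hS0 : ψ x (ψ y z) + ψ y (ψ z x) + ψ z (ψ x y) = 0 := hinj _ hSP
    rw [hanti z (ψ x y), hanti x (ψ y z), hanti y (ψ z x), ← neg_add, ← neg_add,
      neg_eq_zero, add_rotate]
    exact hS0
  · -- Jacobi → inclusion
    intro hjac w hw
    obtain ⟨hw1, hw2⟩ := Submodule.mem_inf.mp hw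
    set π : TensorAlgebra K V →ₗ[K] TensorAlgebra K V ⧸ P := P.mkQ with hπ
    have hrel : ∀ u v : V, π (ι K u * ι K v) = π (ι K v * ι K u) + π (ι K (ψ u v)) := by
      intro u v
      have h : π (ι K u * ι K v - ι K v * ι K u - ι K (ψ u v)) = 0 := by
        rw [hπ, Submodule.mkQ_apply, Submodule.Quotient.mk_eq_zero]
        exact hqP u v
      rw [map_sub, map_sub, sub_sub, sub_eq_zero] at h
      exact h
    let Θ : TensorAlgebra K V →ₗ[K] TensorAlgebra K V ⧸ P :=
      bT.constr K fun w' => PBWAux.fword π ψ b (FreeMonoid.toList w')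
    have hΘ0 : Θ 1 = π 1 := by
      have hone : (1 : TensorAlgebra K V) = bT (FreeMonoid.ofList []) := by rw [hbT]; simp
      conv_lhs => rw [hone, Basis.constr_basis]
      rw [FreeMonoid.toList_ofList]
      simp [PBWAux.fword]
    have hΘ1 : ∀ v : V, Θ (ι K v) = π (ι K v) := by
      have h : Θ ∘ₗ (TensorAlgebra.ι K : V →ₗ[K] TensorAlgebra K V)
          = π ∘ₗ (TensorAlgebra.ι K : V →ₗ[K] TensorAlgebra K V) := by
        apply b.ext
        intro i
        have hone : ι K (b i) = bT (FreeMonoid.ofList [i]) := by rw [hbT]; simp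
        simp only [LinearMap.comp_apply]
        conv_lhs => rw [hone, Basis.constr_basis]
        rw [FreeMonoid.toList_ofList]
        simp [PBWAux.fword]
      exact fun v => LinearMap.congr_fun h v
    have hΘ2 : ∀ u v : V, Θ (ι K u * ι K v) = π (ι K u * ι K v) := by
      have h : (PBWAux.mul2 (K := K) (V := V)).compr₂ Θ
          = (PBWAux.mul2 (K := K) (V := V)).compr₂ π := by
        apply LinearMap.ext_basis b b
        intro i j
        have htwo : ι K (b i) * ι K (b j) = bT (FreeMonoid.ofList [i, j]) := by
          rw [hbT]; simp
        simp only [LinearMap.compr₂_apply, PBWAux.mul2_apply]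
        conv_lhs => rw [htwo, Basis.constr_basis]
        rw [FreeMonoid.toList_ofList]
        simp [PBWAux.fword]
      intro u v
      have := LinearMap.congr_fun (LinearMap.congr_fun h u) v
      simpa using this
    have hΘ3 : ∀ i j k : I, Θ (ι K (b i) * ι K (b j) * ι K (b k)) = PBWAux.nf π ψ b i j k := by
      intro i j k
      have hthree : ι K (b i) * ι K (b j) * ι K (b k) = bT (FreeMonoid.ofList [i, j, k]) := by
        rw [hbT]; simp [mul_assoc]
      conv_lhs => rw [hthree, Basis.constr_basis]
      rw [FreeMonoid.toList_ofList]
      simp [PBWAux.fword]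
    -- Θ kills P·V
    have hq3 : ∀ u v z : V, Θ ((ι K u * ι K v - ι K v * ι K u - ι K (ψ u v)) * ι K z) = 0 := by
      let tri1 : V →ₗ[K] V →ₗ[K] V →ₗ[K] TensorAlgebra K V ⧸ P :=
        LinearMap.mk₂ K
          (fun u v => Θ ∘ₗ (LinearMap.mulLeft K (PBWAux.qmap ψ u v)) ∘ₗ
            (TensorAlgebra.ι K : V →ₗ[K] TensorAlgebra K V))
          (fun u u' v => by
            ext z'
            simp [map_add, LinearMap.add_apply, add_mul])
          (fun c u v => by
            ext z'
            simp [map_smul, LinearMap.smul_apply, smul_mul_assoc])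
          (fun u v v' => by
            ext z'
            simp [map_add, LinearMap.add_apply, add_mul])
          (fun c u v => by
            ext z'
            simp [map_smul, LinearMap.smul_apply, smul_mul_assoc])
      have ht : tri1 = 0 := by
        apply LinearMap.ext_basis b b
        intro i j
        apply b.ext
        intro k
        simp only [tri1, LinearMap.mk₂_apply, LinearMap.comp_apply, LinearMap.mulLeft_apply,
          PBWAux.qmap_apply, LinearMap.zero_apply]
        rw [sub_mul, sub_mul, map_sub, map_sub, hΘ3, hΘ3, hΘ2,
          PBWAux.swapL π ψ halt hjac hrel b i j k]
        abel
      intro u v z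
      have := LinearMap.congr_fun (LinearMap.congr_fun (LinearMap.congr_fun ht u) v) z
      simpa [tri1] using this
    -- Θ kills V·P
    have hq4 : ∀ u v z : V, Θ (ι K z * (ι K u * ι K v - ι K v * ι K u - ι K (ψ u v))) = 0 := by
      let tri2 : V →ₗ[K] V →ₗ[K] V →ₗ[K] TensorAlgebra K V ⧸ P :=
        LinearMap.mk₂ K
          (fun u v => Θ ∘ₗ (LinearMap.mulRight K (PBWAux.qmap ψ u v)) ∘ₗ
            (TensorAlgebra.ι K : V →ₗ[K] TensorAlgebra K V))
          (fun u u' v => by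
            ext z'
            simp [map_add, LinearMap.add_apply, mul_add])
          (fun c u v => by
            ext z'
            simp [map_smul, LinearMap.smul_apply, mul_smul_comm])
          (fun u v v' => by
            ext z'
            simp [map_add, LinearMap.add_apply, mul_add])
          (fun c u v => by
            ext z'
            simp [map_smul, LinearMap.smul_apply, mul_smul_comm])
      have ht : tri2 = 0 := by
        apply LinearMap.ext_basis b b
        intro i j
        apply b.ext
        intro k
        simp only [tri2, LinearMap.mk₂_apply, LinearMap.comp_apply, LinearMap.mulRight_apply,
          PBWAux.qmap_apply, LinearMap.zero_apply]
        rw [mul_sub, mul_sub, map_sub, map_sub, ← mul_assoc, ← mul_assoc, hΘ3, hΘ3, hΘ2,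
          PBWAux.swapR π ψ halt b k i j]
        abel
      intro u v z
      have := LinearMap.congr_fun (LinearMap.congr_fun (LinearMap.congr_fun ht u) v) z
      simpa [tri2] using this
    have hPVker : PV ≤ LinearMap.ker Θ := by
      rw [hPV, Submodule.span_le]
      rintro _ ⟨p, hp, v, rfl⟩
      rw [SetLike.mem_coe, LinearMap.mem_ker]
      have hp' : p ∈ Submodule.span K
          {z | ∃ x y : V, z = TensorAlgebra.ι K x * TensorAlgebra.ι K y -
            TensorAlgebra.ι K y * TensorAlgebra.ι K x - TensorAlgebra.ι K (ψ x y)} := by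
        rw [← hP]; exact hp
      refine Submodule.span_induction ?_ ?_ ?_ ?_ hp'
      · rintro _ ⟨u, u', rfl⟩
        exact hq3 u u' v
      · simp
      · intro a c _ _ ha hc
        rw [add_mul, map_add, ha, hc, add_zero]
      · intro c a _ ha
        rw [smul_mul_assoc, map_smul, ha, smul_zero]
    have hVPker : VP ≤ LinearMap.ker Θ := by
      rw [hVP, Submodule.span_le]
      rintro _ ⟨p, hp, v, rfl⟩
      rw [SetLike.mem_coe, LinearMap.mem_ker]
      have hp' : p ∈ Submodule.span K
          {z | ∃ x y : V, z = TensorAlgebra.ι K x * TensorAlgebra.ι K y -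
            TensorAlgebra.ι K y * TensorAlgebra.ι K x - TensorAlgebra.ι K (ψ x y)} := by
        rw [← hP]; exact hp
      refine Submodule.span_induction ?_ ?_ ?_ ?_ hp'
      · rintro _ ⟨u, u', rfl⟩
        exact hq4 u u' v
      · simp
      · intro a c _ _ ha hc
        rw [mul_add, map_add, ha, hc, add_zero]
      · intro c a _ ha
        rw [mul_smul_comm, map_smul, ha, smul_zero]
    have h0 : Θ w = 0 := (sup_le hPVker hVPker) hw1
    have heq : Θ w = π w := by
      have hker : F2 ≤ LinearMap.ker (Θ - π) := by
        rw [hF2, Submodule.span_le]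
        rintro u ((⟨c, rfl⟩ | ⟨x, rfl⟩) | ⟨x, y, rfl⟩)
        · rw [SetLike.mem_coe, LinearMap.mem_ker, LinearMap.sub_apply, sub_eq_zero,
            Algebra.algebraMap_eq_smul_one, map_smul, map_smul, hΘ0]
        · rw [SetLike.mem_coe, LinearMap.mem_ker, LinearMap.sub_apply, sub_eq_zero]
          exact hΘ1 x
        · rw [SetLike.mem_coe, LinearMap.mem_ker, LinearMap.sub_apply, sub_eq_zero]
          exact hΘ2 x y
      have := hker hw2
      rwa [LinearMap.mem_ker, LinearMap.sub_apply, sub_eq_zero] at this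
    have hw0 : π w = 0 := by rw [← heq, h0]
    rw [hπ, Submodule.mkQ_apply, Submodule.Quotient.mk_eq_zero] at hw0
    exact hw0
end
end

section
/- The element w = Σ_ρ W^ρ ⊗ ∇_ρ in E^{⊗4}, where E has basis ∇_0,…,∇_s and W^ρ = Σ W^{ρλμν} ∇_λ⊗∇_μ⊗∇_ν with W^{ρλμν} = g^{ρλ}g^{μν} + g^{ρν}g^{λμ} − 2g^{ρμ}g^{λν}, satisfies Σ_ρ W^ρ ⊗ ∇_ρ = Σ_ρ ∇_ρ ⊗ W^ρ, i.e. w lies in (R⊗E) ∩ (E⊗R) where R = span{W^ρ}. -/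
open Finset TensorProduct

theorem sum_smul_tmul_rotate_eq_of_cyclic {R M ι : Type*} [CommSemiring R] [AddCommMonoid M]
    [Module R M] [Fintype ι] (T : ι → ι → ι → ι → R) (hT : ∀ ρ l μ ν, T ρ l μ ν = T l μ ν ρ)
    (e : ι → M) :
    (∑ ρ, ∑ l, ∑ μ, ∑ ν, T ρ l μ ν • (e l ⊗ₜ[R] (e μ ⊗ₜ[R] (e ν ⊗ₜ[R] e ρ))) :
      M ⊗[R] (M ⊗[R] (M ⊗[R] M))) =
    ∑ ρ, ∑ l, ∑ μ, ∑ ν, T ρ l μ ν • (e ρ ⊗ₜ[R] (e l ⊗ₜ[R] (e μ ⊗ₜ[R] e ν))) := by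
  -- Move the summation over `ρ` innermost on the left, then rename indices.
  rw [Finset.sum_comm]
  refine Finset.sum_congr rfl fun l _ => ?_
  rw [Finset.sum_comm]
  refine Finset.sum_congr rfl fun μ _ => ?_
  rw [Finset.sum_comm]
  refine Finset.sum_congr rfl fun ν _ => Finset.sum_congr rfl fun ρ _ => ?_
  rw [hT]

theorem yangMills_coeff_cyclic {R ι : Type*} [CommRing R] (g : ι → ι → R)
    (hsym : ∀ α β, g α β = g β α) (ρ l μ ν : ι) :
    g ρ l * g μ ν + g ρ ν * g l μ - 2 * g ρ μ * g l ν =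
      g l μ * g ν ρ + g l ρ * g μ ν - 2 * g l ν * g μ ρ := by
  rw [hsym ρ l, hsym ρ ν, hsym ρ μ]
  ring

theorem yang_mills_w_cyclic_general {K : Type*} [Field K] {s : ℕ}
    (g : Fin (s + 1) → Fin (s + 1) → K)
    (hsym : ∀ α β, g α β = g β α)
    (W : Fin (s + 1) → Fin (s + 1) → Fin (s + 1) → Fin (s + 1) → K)
    (hW : ∀ ρ lam μ ν, W ρ lam μ ν = g ρ lam * g μ ν + g ρ ν * g lam μ - 2 * g ρ μ * g lam ν)
    (e : Fin (s + 1) → (Fin (s + 1) → K)) :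
    (∑ ρ, ∑ lam, ∑ μ, ∑ ν, W ρ lam μ ν •
        (e lam ⊗ₜ[K] (e μ ⊗ₜ[K] (e ν ⊗ₜ[K] e ρ))) :
      (Fin (s + 1) → K) ⊗[K] ((Fin (s + 1) → K) ⊗[K] ((Fin (s + 1) → K) ⊗[K] (Fin (s + 1) → K)))) =
    ∑ ρ, ∑ lam, ∑ μ, ∑ ν, W ρ lam μ ν •
        (e ρ ⊗ₜ[K] (e lam ⊗ₜ[K] (e μ ⊗ₜ[K] e ν))) :=
  sum_smul_tmul_rotate_eq_of_cyclic W
    (fun ρ l μ ν => by rw [hW, hW, yangMills_coeff_cyclic g hsym]) e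

/-- with `e_i` the canonical basis of `E = K^{s+1}` and
`W^{ρλμν} = g^{ρλ}g^{μν} + g^{ρν}g^{λμ} − 2g^{ρμ}g^{λν}`, the element
`w = Σ_ρ W^ρ ⊗ ∇_ρ` of `E^{⊗4}` equals `Σ_ρ ∇_ρ ⊗ W^ρ`. -/
theorem yang_mills_w_cyclic {K : Type*} [Field K] {s : ℕ}
    (g : Fin (s + 1) → Fin (s + 1) → K)
    (hsym : ∀ α β, g α β = g β α)
    (W : Fin (s + 1) → Fin (s + 1) → Fin (s + 1) → Fin (s + 1) → K)
    (hW : ∀ ρ lam μ ν, W ρ lam μ ν = g ρ lam * g μ ν + g ρ ν * g lam μ - 2 * g ρ μ * g lam ν)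
    (e : Fin (s + 1) → (Fin (s + 1) → K))
    (he : ∀ i, e i = Pi.single i 1) :
    (∑ ρ, ∑ lam, ∑ μ, ∑ ν, W ρ lam μ ν •
        (e lam ⊗ₜ[K] (e μ ⊗ₜ[K] (e ν ⊗ₜ[K] e ρ))) :
      (Fin (s + 1) → K) ⊗[K] ((Fin (s + 1) → K) ⊗[K] ((Fin (s + 1) → K) ⊗[K] (Fin (s + 1) → K)))) =
    ∑ ρ, ∑ lam, ∑ μ, ∑ ν, W ρ lam μ ν •
        (e ρ ⊗ₜ[K] (e lam ⊗ₜ[K] (e μ ⊗ₜ[K] e ν))) :=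
  yang_mills_w_cyclic_general g hsym W hW e
end
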